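/- arXiv:math/0611148 — 4 statements merged into one kernel-verified Lean document; each statement's English description precedes it below -/
import Mathlib

section
/- Let m be a positive integer. Every 2×2 integer matrix with determinant m is equal to γ * ((a, b), (0, d)) for some γ ∈ SL(2,ℤ) and unique integers a, b, d with a*d = m, d > 0, and 0 ≤ b < d. -/
/-!
Existence comes from Mathlib's reduction of `FixedDetMatrices`: acting by `S` and `T` (a
Euclidean algorithm on the first column) brings a matrix of determinant `m ≠ 0` into `reps m`,
i.e. upper triangular with `a > 0` and `0 ≤ b < |d|`; for `m > 0` this forces `d > 0`.

For uniqueness, an element of `SL(2, ℤ)` carrying one such upper triangular matrix to another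
must itself be upper triangular with diagonal `(1, 1)`, i.e. a power `T ^ n`. It shifts `b` by
`n * d`, and `0 ≤ b < d` holds on both sides only for `n = 0`.
-/

open Matrix ModularGroup MatrixGroups

namespace ModularGroup

lemma coe_T_zpow_mul_upperTriangular (n a b d : ℤ) :
    (↑(T ^ n) : Matrix (Fin 2) (Fin 2) ℤ) * !![a, b; 0, d] = !![a, b + n * d; 0, d] := by
  simp [coe_T_zpow]

lemma exists_eq_T_zpow_of_mul_upperTriangular {γ : SL(2, ℤ)} {a b d a' b' d' : ℤ}
    (ha : a ≠ 0) (hd : 0 < d) (hd' : 0 < d')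
    (h : (γ : Matrix (Fin 2) (Fin 2) ℤ) * !![a, b; 0, d] = !![a', b'; 0, d']) :
    ∃ n : ℤ, γ = T ^ n := by
  have hdet := γ.det_coe
  rw [det_fin_two] at hdet
  rw [eta_fin_two (γ : Matrix (Fin 2) (Fin 2) ℤ), mul_fin_two] at h
  simp only [EmbeddingLike.apply_eq_iff_eq, vecCons_inj, and_true, mul_zero, add_zero] at h
  obtain ⟨-, h10, h11⟩ := h
  have hc : γ 1 0 = 0 := (mul_eq_zero.1 h10).resolve_right ha
  rw [hc, zero_mul, zero_add] at h11
  have hdiag : γ 1 1 * γ 0 0 = 1 := by rw [hc] at hdet; linarith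
  have hs : γ 1 1 = 1 := by
    rcases Int.eq_one_or_neg_one_of_mul_eq_one hdiag with hs | hs
    · exact hs
    · rw [hs] at h11; linarith
  have hp : γ 0 0 = 1 := by rwa [hs, one_mul] at hdiag
  refine ⟨γ 0 1, Subtype.ext ?_⟩
  ext i j
  fin_cases i <;> fin_cases j <;> simp [coe_T_zpow, hc, hs, hp]

end ModularGroup

lemma FixedDetMatrices.exists_smul_mem_reps {m : ℤ} (hm : m ≠ 0)
    (A : FixedDetMatrix (Fin 2) ℤ m) : ∃ g : SL(2, ℤ), g • A ∈ reps m := by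
  induction A using FixedDetMatrices.induction_on hm with
  | h0 A h10 h00 h01 h11 => exact ⟨1, by rw [one_smul]; exact ⟨h10, h00, h01, h11⟩⟩
  | hS B ih =>
    obtain ⟨g, hg⟩ := ih
    exact ⟨g * S⁻¹, by rwa [mul_smul, inv_smul_smul]⟩
  | hT B ih =>
    obtain ⟨g, hg⟩ := ih
    exact ⟨g * T⁻¹, by rwa [mul_smul, inv_smul_smul]⟩

lemma exists_SL2Z_mul_upperTriangular {m : ℤ} (hm : 0 < m) (A : Matrix (Fin 2) (Fin 2) ℤ)
    (hA : A.det = m) :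
    ∃ a b d : ℤ, a * d = m ∧ 0 < d ∧ 0 ≤ b ∧ b < d ∧
      ∃ γ : SL(2, ℤ), A = (γ : Matrix (Fin 2) (Fin 2) ℤ) * !![a, b; 0, d] := by
  obtain ⟨B, hB⟩ : ∃ B : FixedDetMatrix (Fin 2) ℤ m, B.1 = A := ⟨⟨A, hA⟩, rfl⟩
  obtain ⟨g, h10, h00, h01, h11⟩ := FixedDetMatrices.exists_smul_mem_reps hm.ne' B
  set R := (g • B).1 with hR
  have hRA : R = g * A := by rw [hR, FixedDetMatrices.smul_coe, hB]
  have hdet : R 0 0 * R 1 1 = m := by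
    have hRdet : R.det = m := (g • B).2
    rwa [det_fin_two, h10, mul_zero, sub_zero] at hRdet
  have hd : 0 < R 1 1 := pos_of_mul_pos_right (hdet.symm ▸ hm) h00.le
  refine ⟨R 0 0, R 0 1, R 1 1, hdet, hd, h01, ?_, g⁻¹, ?_⟩
  · rwa [abs_of_nonneg h01, abs_of_pos hd] at h11
  · rw [← h10, ← eta_fin_two, hRA, ← mul_assoc, ← Matrix.SpecialLinearGroup.coe_mul,
      inv_mul_cancel, Matrix.SpecialLinearGroup.coe_one, one_mul]

lemma eq_of_SL2Z_mul_upperTriangular_eq {γ γ' : SL(2, ℤ)} {a b d a' b' d' : ℤ} (ha : a ≠ 0)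
    (hd : 0 < d) (hb : 0 ≤ b) (hbd : b < d) (hd' : 0 < d') (hb' : 0 ≤ b') (hbd' : b' < d')
    (h : (γ : Matrix (Fin 2) (Fin 2) ℤ) * !![a, b; 0, d] =
      (γ' : Matrix (Fin 2) (Fin 2) ℤ) * !![a', b'; 0, d']) :
    (a, b, d) = (a', b', d') := by
  have h' : ((γ'⁻¹ * γ : SL(2, ℤ)) : Matrix (Fin 2) (Fin 2) ℤ) * !![a, b; 0, d] =
      !![a', b'; 0, d'] := by
    rw [Matrix.SpecialLinearGroup.coe_mul, mul_assoc, h, ← mul_assoc,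
      ← Matrix.SpecialLinearGroup.coe_mul, inv_mul_cancel, Matrix.SpecialLinearGroup.coe_one,
      one_mul]
  obtain ⟨n, hn⟩ := exists_eq_T_zpow_of_mul_upperTriangular ha hd hd' h'
  rw [hn, coe_T_zpow_mul_upperTriangular] at h'
  simp only [EmbeddingLike.apply_eq_iff_eq, vecCons_inj, and_true] at h'
  obtain ⟨⟨rfl, rfl⟩, -, rfl⟩ := h'
  congr 2
  calc b = b % d := (Int.emod_eq_of_lt hb hbd).symm
    _ = (b + n * d) % d := (Int.add_mul_emod_self_right b n d).symm
    _ = b + n * d := Int.emod_eq_of_lt hb' hbd'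

/-- Every 2×2 integer matrix of determinant m > 0 equals γ β_{a,b,d} with γ ∈ SL(2,ℤ)
and unique (a, b, d) with ad = m, d > 0, 0 ≤ b < d. -/
theorem coset_representatives (m : ℤ) (hm : 0 < m) (A : Matrix (Fin 2) (Fin 2) ℤ)
    (hA : A.det = m) :
    ∃! t : ℤ × ℤ × ℤ,
      t.1 * t.2.2 = m ∧ 0 < t.2.2 ∧ 0 ≤ t.2.1 ∧ t.2.1 < t.2.2 ∧
      ∃ γ : Matrix.SpecialLinearGroup (Fin 2) ℤ,
        A = (γ : Matrix (Fin 2) (Fin 2) ℤ) * !![t.1, t.2.1; 0, t.2.2] := by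
  obtain ⟨a, b, d, had, hd, hb, hbd, γ, hγ⟩ := exists_SL2Z_mul_upperTriangular hm A hA
  refine ⟨(a, b, d), ⟨had, hd, hb, hbd, γ, hγ⟩, ?_⟩
  rintro ⟨a', b', d'⟩ ⟨had', hd', hb', hbd', γ', hγ'⟩
  have ha' : a' ≠ 0 := left_ne_zero_of_mul (had'.symm ▸ hm.ne')
  exact eq_of_SL2Z_mul_upperTriangular_eq ha' hd' hb' hbd' hd hb hbd (hγ'.symm.trans hγ)
end

section
/- Let m be a positive integer. The set of triples (a, b, d) with a*d = m, d > 0, 0 ≤ b < d (with no coprimality condition) decomposes as a disjoint union over positive integers l with l² dividing m of the sets { (l*a', l*b', l*d') : a'*d' = m/l², d' > 0, 0 ≤ b' < d', gcd(a', b', d') = 1 }. -/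
/-- The set R*_m of triples (a,b,d) with ad = m, d > 0, 0 ≤ b < d. -/
def RstarSet (m : ℤ) : Set (ℤ × ℤ × ℤ) :=
  {t | t.1 * t.2.2 = m ∧ 0 < t.2.2 ∧ 0 ≤ t.2.1 ∧ t.2.1 < t.2.2}

/-- The set R_m of primitive triples (a,b,d) with ad = m, d > 0, 0 ≤ b < d, gcd(a,b,d)=1. -/
def RprimSet (m : ℤ) : Set (ℤ × ℤ × ℤ) :=
  {t | t.1 * t.2.2 = m ∧ 0 < t.2.2 ∧ 0 ≤ t.2.1 ∧ t.2.1 < t.2.2 ∧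
    Int.gcd t.1 (Int.gcd t.2.1 t.2.2) = 1}

/-!
A triple in R*_m is `g` times a primitive triple, where `g` is the gcd of its entries, and then
`g² ∣ m`. So `l · R_{m/l²}` is exactly the fibre of R*_m over `l` of the map `t ↦ gcd t`, and the
decomposition is the partition of R*_m into these fibres.
-/

namespace Rstar

def scale (l : ℤ) (t : ℤ × ℤ × ℤ) : ℤ × ℤ × ℤ := (l * t.1, l * t.2.1, l * t.2.2)

def tripleGcd (t : ℤ × ℤ × ℤ) : ℕ := Int.gcd t.1 (Int.gcd t.2.1 t.2.2)

lemma mem_RprimSet_iff {m : ℤ} {t : ℤ × ℤ × ℤ} :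
    t ∈ RprimSet m ↔ t ∈ RstarSet m ∧ tripleGcd t = 1 := by
  simp only [RprimSet, RstarSet, tripleGcd, Set.mem_ofPred_eq, and_assoc]

lemma tripleGcd_scale (l : ℤ) (t : ℤ × ℤ × ℤ) :
    tripleGcd (scale l t) = l.natAbs * tripleGcd t := by
  simp [tripleGcd, scale, Int.gcd, Int.natAbs_mul, Int.natAbs_abs, Nat.gcd_mul_left]

lemma tripleGcd_pos_of_mem_RstarSet {m : ℤ} {t : ℤ × ℤ × ℤ} (ht : t ∈ RstarSet m) :
    0 < tripleGcd t :=
  Nat.pos_of_ne_zero <| by simp [tripleGcd, Int.gcd_eq_zero_iff, ht.2.1.ne']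

lemma exists_eq_scale_tripleGcd (t : ℤ × ℤ × ℤ) : ∃ t', t = scale (tripleGcd t) t' := by
  have hbd := Int.gcd_dvd_right t.1 (Int.gcd t.2.1 t.2.2)
  obtain ⟨a, ha⟩ := Int.gcd_dvd_left t.1 (Int.gcd t.2.1 t.2.2)
  obtain ⟨b, hb⟩ := hbd.trans (Int.gcd_dvd_left t.2.1 t.2.2)
  obtain ⟨d, hd⟩ := hbd.trans (Int.gcd_dvd_right t.2.1 t.2.2)
  exact ⟨(a, b, d), Prod.ext ha (Prod.ext hb hd)⟩

lemma scale_mem_RstarSet_iff {l n : ℤ} (hl : 0 < l) {t : ℤ × ℤ × ℤ} :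
    scale l t ∈ RstarSet (l ^ 2 * n) ↔ t ∈ RstarSet n := by
  have hl2 : l ^ 2 ≠ 0 := pow_ne_zero 2 hl.ne'
  have hprod : l * t.1 * (l * t.2.2) = l ^ 2 * (t.1 * t.2.2) := by ring
  simp only [RstarSet, scale, Set.mem_ofPred_eq, hprod, mul_right_inj' hl2,
    mul_pos_iff_of_pos_left hl, mul_nonneg_iff_of_pos_left hl, mul_lt_mul_iff_right₀ hl]

lemma sq_tripleGcd_dvd_of_mem_RstarSet {m : ℤ} {t : ℤ × ℤ × ℤ} (ht : t ∈ RstarSet m) :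
    (tripleGcd t : ℤ) ^ 2 ∣ m := by
  obtain ⟨t', ht'⟩ := exists_eq_scale_tripleGcd t
  rw [← ht.1]
  generalize (tripleGcd t : ℤ) = g at ht' ⊢
  subst ht'
  exact ⟨t'.1 * t'.2.2, by simp only [scale]; ring⟩

lemma image_scale_RprimSet {m l : ℤ} (hl : 0 < l) (hdvd : l ^ 2 ∣ m) :
    scale l '' RprimSet (m / l ^ 2) = {t | t ∈ RstarSet m ∧ (tripleGcd t : ℤ) = l} := by
  have hm : l ^ 2 * (m / l ^ 2) = m := Int.mul_ediv_cancel' hdvd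
  have habs : (l.natAbs : ℤ) = l := Int.natAbs_of_nonneg hl.le
  ext t
  constructor
  · rintro ⟨t', ht', rfl⟩
    rw [mem_RprimSet_iff] at ht'
    refine ⟨hm ▸ (scale_mem_RstarSet_iff hl).mpr ht'.1, ?_⟩
    rw [tripleGcd_scale, ht'.2, mul_one, habs]
  · rintro ⟨ht, hgcd⟩
    obtain ⟨t', ht'⟩ := exists_eq_scale_tripleGcd t
    rw [hgcd] at ht'
    subst ht'
    have hprim : tripleGcd t' = 1 := by
      have := tripleGcd_scale l t'
      rw [← Int.natCast_inj, hgcd, Nat.cast_mul, habs] at this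
      exact_mod_cast (mul_eq_left₀ hl.ne').mp this.symm
    rw [← hm, scale_mem_RstarSet_iff hl] at ht
    exact ⟨t', mem_RprimSet_iff.mpr ⟨ht, hprim⟩, rfl⟩

end Rstar

open Rstar in
theorem Rstar_decomposition_general (m : ℤ) :
    (RstarSet m =
      ⋃ l ∈ {l : ℤ | 0 < l ∧ l ^ 2 ∣ m},
        (fun t : ℤ × ℤ × ℤ => (l * t.1, l * t.2.1, l * t.2.2)) '' RprimSet (m / l ^ 2)) ∧
    (∀ l l' : ℤ, 0 < l → l ^ 2 ∣ m → 0 < l' → l' ^ 2 ∣ m → l ≠ l' →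
      Disjoint
        ((fun t : ℤ × ℤ × ℤ => (l * t.1, l * t.2.1, l * t.2.2)) '' RprimSet (m / l ^ 2))
        ((fun t : ℤ × ℤ × ℤ => (l' * t.1, l' * t.2.1, l' * t.2.2)) '' RprimSet (m / l' ^ 2))) := by
  refine ⟨?_, fun l l' hl hl2 hl' hl2' hne => ?_⟩
  · ext t
    simp only [Set.mem_iUnion, Set.mem_ofPred_eq, exists_prop]
    constructor
    · intro ht
      have hg : 0 < (tripleGcd t : ℤ) := by exact_mod_cast tripleGcd_pos_of_mem_RstarSet ht
      have hdvd := sq_tripleGcd_dvd_of_mem_RstarSet ht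
      exact ⟨_, ⟨hg, hdvd⟩, image_scale_RprimSet hg hdvd ▸ ⟨ht, rfl⟩⟩
    · rintro ⟨l, ⟨hl, hl2⟩, ht⟩
      exact ((image_scale_RprimSet hl hl2).subset ht).1
  · change Disjoint (scale l '' _) (scale l' '' _)
    rw [image_scale_RprimSet hl hl2, image_scale_RprimSet hl' hl2', Set.disjoint_left]
    exact fun t ht ht' => hne (ht.2.symm.trans ht'.2)

/-- R*_m is the disjoint union over l² ∣ m, l > 0, of l · R_{m/l²}. -/
theorem Rstar_decomposition (m : ℤ) (hm : 0 < m) :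
    (RstarSet m =
      ⋃ l ∈ {l : ℤ | 0 < l ∧ l ^ 2 ∣ m},
        (fun t : ℤ × ℤ × ℤ => (l * t.1, l * t.2.1, l * t.2.2)) '' RprimSet (m / l ^ 2)) ∧
    (∀ l l' : ℤ, 0 < l → l ^ 2 ∣ m → 0 < l' → l' ^ 2 ∣ m → l ≠ l' →
      Disjoint
        ((fun t : ℤ × ℤ × ℤ => (l * t.1, l * t.2.1, l * t.2.2)) '' RprimSet (m / l ^ 2))
        ((fun t : ℤ × ℤ × ℤ => (l' * t.1, l' * t.2.1, l' * t.2.2)) '' RprimSet (m / l' ^ 2))) :=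
  Rstar_decomposition_general m
end

section
/- Let χ: ℕ → ℂ be completely multiplicative on the relevant arguments, p a prime, ε = χ(p), and let (a_r)_{r ≥ 0} be a sequence of complex numbers with a_0 = 1 satisfying the recurrence a_{r+1} = a_1 * a_r - ε * a_{r-1} for all r ≥ 1. Then for all r, s ≥ 0: a_r * a_s = Σ_{j=0}^{min(r,s)} ε^j * a_{r+s-2j}. -/
/-- Abstract Hecke recursion at one prime: if a_0 = 1 and
a_{r+1} = a_1 a_r - ε a_{r-1} for r ≥ 1, then
a_r a_s = Σ_{j=0}^{min(r,s)} ε^j a_{r+s-2j}. -/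
theorem hecke_prime_recursion (χ : ℕ → ℂ) (p : ℕ) (hp : p.Prime) (ε : ℂ) (hε : ε = χ p)
    (a : ℕ → ℂ) (h0 : a 0 = 1)
    (hrec : ∀ r : ℕ, 1 ≤ r → a (r + 1) = a 1 * a r - ε * a (r - 1)) :
    ∀ r s : ℕ, a r * a s =
      ∑ j ∈ Finset.range (min r s + 1), ε ^ j * a (r + s - 2 * j) := by
  have aux : ∀ s r : ℕ, s ≤ r → a r * a s =
      ∑ j ∈ Finset.range (s + 1), ε ^ j * a (r + s - 2 * j) := by
    intro s
    induction s using Nat.strong_induction_on with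
    | _ s ih =>
      match s with
      | 0 => intro r _; simp [h0]
      | 1 =>
        intro r hr
        have h1 : r + 1 - 2 * 1 = r - 1 := by omega
        have h2 : r + 1 - 2 * 0 = r + 1 := by omega
        rw [Finset.sum_range_succ, Finset.sum_range_one, h1, h2, hrec r hr]
        simp
        ring
      | (t+2) =>
        intro r hr
        have ih1 := ih (t+1) (by omega) r (by omega)
        have ih0 := ih t (by omega) r (by omega)
        have hs : a (t+2) = a 1 * a (t+1) - ε * a t := by
          have := hrec (t+1) (by omega)
          simpa using this
        calc a r * a (t+2)
            = a 1 * (a r * a (t+1)) - ε * (a r * a t) := by rw [hs]; ring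
          _ = (∑ j ∈ Finset.range (t+2), ε ^ j * (a 1 * a (r + (t+1) - 2*j)))
              - ε * ∑ j ∈ Finset.range (t+1), ε ^ j * a (r + t - 2*j) := by
              rw [ih1, ih0, Finset.mul_sum]
              congr 1
              exact Finset.sum_congr rfl (fun j _ => by ring)
          _ = (∑ j ∈ Finset.range (t+2),
                (ε ^ j * a (r + (t+2) - 2*j) + ε ^ (j+1) * a (r + t - 2*j)))
              - ε * ∑ j ∈ Finset.range (t+1), ε ^ j * a (r + t - 2*j) := by
              congr 1
              apply Finset.sum_congr rfl
              intro j hj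
              have hj' : j < t + 2 := Finset.mem_range.mp hj
              have hm : 1 ≤ r + (t+1) - 2*j := by omega
              have h1 := hrec (r + (t+1) - 2*j) hm
              have e1 : r + (t+1) - 2*j + 1 = r + (t+2) - 2*j := by omega
              have e2 : r + (t+1) - 2*j - 1 = r + t - 2*j := by omega
              rw [e1, e2] at h1
              have h2 : a 1 * a (r + (t+1) - 2*j)
                  = a (r + (t+2) - 2*j) + ε * a (r + t - 2*j) := by rw [h1]; ring
              rw [h2]; ring
          _ = ∑ j ∈ Finset.range (t+2+1), ε ^ j * a (r + (t+2) - 2*j) := by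
              rw [Finset.sum_add_distrib]
              rw [Finset.sum_range_succ (fun j => ε ^ (j+1) * a (r + t - 2*j)) (t+1)]
              rw [Finset.sum_range_succ (fun j => ε ^ j * a (r + (t+2) - 2*j)) (t+2)]
              have hlast : r + t - 2*(t+1) = r + (t+2) - 2*(t+2) := by omega
              have hmul : ∑ j ∈ Finset.range (t+1), ε ^ (j+1) * a (r + t - 2*j)
                  = ε * ∑ j ∈ Finset.range (t+1), ε ^ j * a (r + t - 2*j) := by
                rw [Finset.mul_sum]
                exact Finset.sum_congr rfl (fun j _ => by ring)
              simp only [hlast, hmul]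
              ring
  intro r s
  rcases le_total s r with h | h
  · rw [min_eq_right h]
    exact aux s r h
  · rw [min_eq_left h, mul_comm, Nat.add_comm r s]
    exact aux r s h
end

section
/- Let k be an integer with 1 ≤ k ≤ 11 and set D = k / gcd(12, k). For any positive integer m with k*m ≡ k (mod 12), one has gcd(m, k*(m-1)/12) = gcd(m, D). -/
/-!
With `g = gcd 12 k`, the cofactors `12 / g` and `k / g` are coprime, so `12 ∣ k (m - 1)` forces
`12 / g ∣ m - 1`. Writing `m - 1 = (12 / g) s`, the quotient `k (m - 1) / 12` is `(k / g) s`, and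
`s` is coprime to `m = (12 / g) s + 1`, so it drops out of the gcd with `m`.
-/

namespace Int

theorem gcd_mul_right_eq_of_isCoprime {m a s : ℤ} (h : IsCoprime m s) :
    gcd m (a * s) = gcd m a := by
  rw [gcd, natAbs_mul]
  exact Nat.Coprime.gcd_mul_right_cancel_right _ (isCoprime_iff_gcd_eq_one.mp h.symm)

theorem isCoprime_ediv_of_dvd_sub_one {m t : ℤ} (ht : t ∣ m - 1) : IsCoprime m ((m - 1) / t) :=
  ⟨1, -t, by rw [neg_mul, Int.mul_ediv_cancel' ht]; ring⟩

section
variable {n k x : ℤ}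

theorem ediv_gcd_dvd_of_dvd_mul (hn : n ≠ 0) (h : n ∣ k * x) : n / gcd n k ∣ x := by
  have hg : 0 < gcd n k := gcd_pos_of_ne_zero_left k hn
  set g : ℤ := (gcd n k : ℤ)
  have hgn : g * (n / g) = n := Int.mul_ediv_cancel' (gcd_dvd_left n k)
  have hgk : g * (k / g) = k := Int.mul_ediv_cancel' (gcd_dvd_right n k)
  refine dvd_of_dvd_mul_right_of_gcd_one (b := k / g) ?_ (gcd_ediv_gcd_ediv_gcd hg)
  rw [← hgn, ← hgk, mul_assoc] at h
  exact (mul_dvd_mul_iff_left (by positivity)).mp h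

theorem mul_ediv_eq_ediv_gcd_mul (hn : n ≠ 0) (h : n ∣ k * x) :
    k * x / n = k / gcd n k * (x / (n / gcd n k)) := by
  have hx : n / gcd n k * (x / (n / gcd n k)) = x :=
    Int.mul_ediv_cancel' (ediv_gcd_dvd_of_dvd_mul hn h)
  set g : ℤ := (gcd n k : ℤ)
  have hgn : g * (n / g) = n := Int.mul_ediv_cancel' (gcd_dvd_left n k)
  have hgk : g * (k / g) = k := Int.mul_ediv_cancel' (gcd_dvd_right n k)
  have hkx : k * x = n * (k / g * (x / (n / g))) := by
    linear_combination (-x) * hgk - g * (k / g) * hx + k / g * (x / (n / g)) * hgn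
  rw [hkx, Int.mul_ediv_cancel_left _ hn]

end
end Int

theorem gcd_with_D_general (k : ℤ) (m : ℤ)
    (hcong : (12 : ℤ) ∣ k * (m - 1)) :
    Int.gcd m (k * (m - 1) / 12) = Int.gcd m (k / (Int.gcd 12 k : ℤ)) := by
  rw [Int.mul_ediv_eq_ediv_gcd_mul (by norm_num) hcong]
  exact Int.gcd_mul_right_eq_of_isCoprime
    (Int.isCoprime_ediv_of_dvd_sub_one (Int.ediv_gcd_dvd_of_dvd_mul (by norm_num) hcong))

/-- For 1 ≤ k ≤ 11, D = k/gcd(12,k) and km ≡ k (mod 12),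
gcd(m, k(m-1)/12) = gcd(m, D). -/
theorem gcd_with_D (k : ℤ) (hk1 : 1 ≤ k) (hk11 : k ≤ 11) (m : ℤ) (hm : 0 < m)
    (hcong : (12 : ℤ) ∣ k * (m - 1)) :
    Int.gcd m (k * (m - 1) / 12) = Int.gcd m (k / (Int.gcd 12 k : ℤ)) :=
  gcd_with_D_general k m hcong
end
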